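/- arXiv:2103.16993 — 7 statements merged into one kernel-verified Lean document; each statement's English description precedes it below -/
import Mathlib

section
/- Let P ∈ ℝ^{n×n} be a row stochastic matrix and define g(μ) = max_{1≤i,j≤n} |μ_i − μ_j| for μ ∈ ℝ^n, and τ(P) = 1 − min_{i,j} Σ_{s=1}^n min{P_{is}, P_{js}}. Then for every μ ∈ ℝ^n, g(Pμ) ≤ τ(P) g(μ). -/
/-- Hajnal's inequality: for a row stochastic matrix `P`,
`g(Pμ) ≤ τ(P) g(μ)` where `g` is the maximal pairwise spread and
`τ(P) = 1 − min_{i,j} Σ_s min(P_{is}, P_{js})`. -/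
theorem stmt3 {n : ℕ} [Nonempty (Fin n)] (P : Matrix (Fin n) (Fin n) ℝ)
    (hnn : ∀ i j, 0 ≤ P i j) (hrow : ∀ i, ∑ j, P i j = 1)
    (μ : Fin n → ℝ) :
    (Finset.univ : Finset (Fin n × Fin n)).sup' Finset.univ_nonempty
        (fun p => |(P.mulVec μ) p.1 - (P.mulVec μ) p.2|)
      ≤ (1 - (Finset.univ : Finset (Fin n × Fin n)).inf' Finset.univ_nonempty
            (fun p => ∑ s, min (P p.1 s) (P p.2 s)))
        * (Finset.univ : Finset (Fin n × Fin n)).sup' Finset.univ_nonempty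
            (fun p => |μ p.1 - μ p.2|) := by
  set g := (Finset.univ : Finset (Fin n × Fin n)).sup' Finset.univ_nonempty
      (fun p => |μ p.1 - μ p.2|) with hgdef
  set τ := (1 - (Finset.univ : Finset (Fin n × Fin n)).inf' Finset.univ_nonempty
      (fun p => ∑ s, min (P p.1 s) (P p.2 s))) with hτdef
  set M := Finset.univ.sup' Finset.univ_nonempty μ with hMdef
  set m := Finset.univ.inf' Finset.univ_nonempty μ with hmdef
  have hmleM : m ≤ M := le_trans
    (Finset.inf'_le μ (Finset.mem_univ (Classical.arbitrary (Fin n))))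
    (Finset.le_sup' μ (Finset.mem_univ (Classical.arbitrary (Fin n))))
  have hMm : M - m ≤ g := by
    obtain ⟨i0, _, hi0⟩ := Finset.exists_mem_eq_sup' Finset.univ_nonempty μ
    obtain ⟨j0, _, hj0⟩ := Finset.exists_mem_eq_inf' Finset.univ_nonempty μ
    calc M - m ≤ |μ i0 - μ j0| := by rw [hMdef, hmdef, hi0, hj0]; exact le_abs_self _
      _ ≤ g := Finset.le_sup' (fun p => |μ p.1 - μ p.2|) (Finset.mem_univ (i0, j0))
  have hτnn : 0 ≤ τ := by
    obtain ⟨p0, _, hp0⟩ := Finset.exists_mem_eq_inf' Finset.univ_nonempty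
      (fun p : Fin n × Fin n => ∑ s, min (P p.1 s) (P p.2 s))
    have : ∑ s, min (P p0.1 s) (P p0.2 s) ≤ 1 := by
      rw [← hrow p0.1]
      exact Finset.sum_le_sum fun s _ => min_le_left _ _
    simp only [hτdef, hp0, sub_nonneg]
    exact this
  have key : ∀ i j : Fin n, P.mulVec μ i - P.mulVec μ j
      ≤ (1 - ∑ s, min (P i s) (P j s)) * (M - m) := by
    intro i j
    set c := 1 - ∑ s, min (P i s) (P j s) with hc
    have hsumA : ∑ s, (P i s - min (P i s) (P j s)) = c := by
      rw [Finset.sum_sub_distrib, hrow i]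
    have hsumB : ∑ s, (P j s - min (P i s) (P j s)) = c := by
      rw [Finset.sum_sub_distrib, hrow j]
    have h1 : ∑ s, (P i s - min (P i s) (P j s)) * μ s ≤ c * M := by
      rw [← hsumA, Finset.sum_mul]
      refine Finset.sum_le_sum fun s _ => ?_
      exact mul_le_mul_of_nonneg_left (Finset.le_sup' μ (Finset.mem_univ s))
        (sub_nonneg.2 (min_le_left _ _))
    have h2 : c * m ≤ ∑ s, (P j s - min (P i s) (P j s)) * μ s := by
      rw [← hsumB, Finset.sum_mul]
      refine Finset.sum_le_sum fun s _ => ?_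
      exact mul_le_mul_of_nonneg_left (Finset.inf'_le μ (Finset.mem_univ s))
        (sub_nonneg.2 (min_le_right _ _))
    have heq : P.mulVec μ i - P.mulVec μ j
        = (∑ s, (P i s - min (P i s) (P j s)) * μ s)
          - ∑ s, (P j s - min (P i s) (P j s)) * μ s := by
      simp only [Matrix.mulVec, dotProduct, sub_mul,
        Finset.sum_sub_distrib]
      ring
    rw [heq, mul_sub]
    exact sub_le_sub h1 h2
  refine Finset.sup'_le _ _ fun p _ => ?_
  have habs : |P.mulVec μ p.1 - P.mulVec μ p.2|
      ≤ (1 - ∑ s, min (P p.1 s) (P p.2 s)) * (M - m) := by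
    rw [abs_le]
    constructor
    · have := key p.2 p.1
      simp only [fun s => min_comm (P p.2 s) (P p.1 s)] at this
      linarith
    · exact key p.1 p.2
  refine habs.trans ?_
  have hcτ : 1 - ∑ s, min (P p.1 s) (P p.2 s) ≤ τ := by
    simp only [hτdef, sub_le_sub_iff_left]
    exact Finset.inf'_le _ (Finset.mem_univ p)
  exact mul_le_mul hcτ hMm (by linarith) hτnn
end

section
/- Let {a_k}, {b_k}, {c_k} be sequences of nonnegative real numbers with Σ_{k=0}^∞ b_k < ∞. If a_{k+1} ≤ a_k + b_k − c_k for all k ∈ ℕ, then the limit lim_{k→∞} a_k exists and is a finite real number. -/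
open Filter

/-- Deterministic supermartingale convergence: nonnegative `a, b, c` with `Σ b < ∞`
and `a_{k+1} ≤ a_k + b_k − c_k` imply `a_k` converges to a finite limit. -/
theorem stmt4 (a b c : ℕ → ℝ)
    (ha : ∀ k, 0 ≤ a k) (hb : ∀ k, 0 ≤ b k) (hc : ∀ k, 0 ≤ c k)
    (hbsum : Summable b)
    (hrec : ∀ k, a (k + 1) ≤ a k + b k - c k) :
    ∃ l : ℝ, Tendsto a atTop (nhds l) := by
  set B : ℕ → ℝ := fun n => ∑' i, b (i + n) with hBdef
  have hBsum : ∀ n, Summable fun i => b (i + n) := fun n =>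
    (summable_nat_add_iff n).2 hbsum
  have hBnonneg : ∀ n, 0 ≤ B n := fun n => tsum_nonneg fun i => hb _
  have hBrec : ∀ n, B n = b n + B (n + 1) := by
    intro n
    have h := Summable.tsum_eq_zero_add (hBsum n)
    simpa [hBdef, add_comm, add_assoc, add_left_comm] using h
  set f : ℕ → ℝ := fun n => a n + B n with hfdef
  have hanti : Antitone f := by
    apply antitone_nat_of_succ_le
    intro n
    have h1 := hrec n
    have h2 := hc n
    have := hBrec n
    simp only [hfdef]
    nlinarith
  have hbdd : BddBelow (Set.range f) := by
    refine ⟨0, ?_⟩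
    rintro x ⟨n, rfl⟩
    exact add_nonneg (ha n) (hBnonneg n)
  have hf : Tendsto f atTop (nhds (⨅ n, f n)) :=
    tendsto_atTop_ciInf hanti hbdd
  have hB0 : Tendsto B atTop (nhds 0) := tendsto_sum_nat_add b
  refine ⟨⨅ n, f n, ?_⟩
  have : Tendsto (fun n => f n - B n) atTop (nhds ((⨅ n, f n) - 0)) := hf.sub hB0
  simpa [hfdef] using this
end

section
/- Let {A(k)}_{k∈ℕ} be row stochastic n×n matrices, each with all diagonal entries ≥ η and all positive entries ≥ η for some η ∈ (0,1), and suppose the graph sequence is uniformly jointly strongly connected with window B (the union graph over any interval of length B is strongly connected). Then for the transition matrices Φ(k,s) = A(k)A(k−1)⋯A(s), every entry satisfies [Φ(s+(n−1)B−1, s)]_{ij} ≥ η^{(n−1)B} for all i, j ∈ {1,…,n} and s ∈ ℕ. -/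
/-- `Phi A s t` is the transition matrix `Φ(s+t, s) = A(s+t)⋯A(s)`. -/
def Phi {n : ℕ} (A : ℕ → Matrix (Fin n) (Fin n) ℝ) (s : ℕ) : ℕ → Matrix (Fin n) (Fin n) ℝ
  | 0 => A s
  | t + 1 => A (s + t + 1) * Phi A s t

/-- Positivity predicate: `Pos A s j m i` says the `(i,j)` entry of the product of the
first `m` matrices `A(s+m-1)⋯A(s)` is positive (for `m = 0` the product is the identity). -/
def Pos {n : ℕ} (A : ℕ → Matrix (Fin n) (Fin n) ℝ) (s : ℕ) (j : Fin n) :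
    ℕ → Fin n → Prop
  | 0, i => i = j
  | m + 1, i => 0 < Phi A s m i j

lemma phi_succ_apply {n : ℕ} (A : ℕ → Matrix (Fin n) (Fin n) ℝ) (s t : ℕ) (i j : Fin n) :
    Phi A s (t + 1) i j = ∑ k, A (s + t + 1) i k * Phi A s t k j := by
  show (A (s + t + 1) * Phi A s t) i j = _
  rw [Matrix.mul_apply]

section aux

variable {n : ℕ} {A : ℕ → Matrix (Fin n) (Fin n) ℝ} {η : ℝ}
  (hη0 : 0 < η) (hnn : ∀ k i j, 0 ≤ A k i j)
  (hdiag : ∀ k i, η ≤ A k i i) (hpos : ∀ k i j, 0 < A k i j → η ≤ A k i j)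

include hnn in
lemma phi_nonneg (s : ℕ) : ∀ t (i j : Fin n), 0 ≤ Phi A s t i j := by
  intro t
  induction t with
  | zero => intro i j; exact hnn s i j
  | succ t ih =>
    intro i j
    rw [phi_succ_apply]
    exact Finset.sum_nonneg fun k _ => mul_nonneg (hnn _ i k) (ih k j)

include hη0 hnn hpos in
lemma phi_lb (s : ℕ) : ∀ t (i j : Fin n), 0 < Phi A s t i j → η ^ (t + 1) ≤ Phi A s t i j := by
  intro t
  induction t with
  | zero => intro i j h; rw [pow_one]; exact hpos s i j h
  | succ t ih =>
    intro i j h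
    rw [phi_succ_apply] at h ⊢
    have h0 : ∑ k : Fin n, (0:ℝ) < ∑ k, A (s + t + 1) i k * Phi A s t k j := by simpa using h
    obtain ⟨k, -, hk⟩ := Finset.exists_lt_of_sum_lt h0
    have hA : 0 < A (s + t + 1) i k := by
      by_contra hc
      push_neg at hc
      have : A (s + t + 1) i k = 0 := le_antisymm hc (hnn _ i k)
      rw [this, zero_mul] at hk
      exact lt_irrefl 0 hk
    have hP : 0 < Phi A s t k j := by
      by_contra hc
      push_neg at hc
      have : Phi A s t k j = 0 := le_antisymm hc (phi_nonneg hnn s t k j)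
      rw [this, mul_zero] at hk
      exact lt_irrefl 0 hk
    calc η ^ (t + 1 + 1) = η * η ^ (t + 1) := by ring
      _ ≤ A (s + t + 1) i k * Phi A s t k j :=
        mul_le_mul (hpos _ i k hA) (ih k j hP) (le_of_lt (pow_pos hη0 _)) (hnn _ i k)
      _ ≤ ∑ l, A (s + t + 1) i l * Phi A s t l j :=
        Finset.single_le_sum (f := fun l => A (s + t + 1) i l * Phi A s t l j)
          (fun l _ => mul_nonneg (hnn _ i l) (phi_nonneg hnn s t l j)) (Finset.mem_univ k)

include hη0 hnn hdiag in
lemma pos_mono (s : ℕ) (j : Fin n) :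
    ∀ m (i : Fin n), Pos A s j m i → Pos A s j (m + 1) i := by
  intro m i h
  match m, h with
  | 0, h =>
    show 0 < Phi A s 0 i j
    subst h
    exact lt_of_lt_of_le hη0 (hdiag s i)
  | m + 1, h =>
    show 0 < Phi A s (m + 1) i j
    rw [phi_succ_apply]
    have h1 : 0 < A (s + m + 1) i i * Phi A s m i j :=
      mul_pos (lt_of_lt_of_le hη0 (hdiag _ i)) h
    refine lt_of_lt_of_le h1 ?_
    exact Finset.single_le_sum (f := fun l => A (s + m + 1) i l * Phi A s m l j)
      (fun l _ => mul_nonneg (hnn _ i l) (phi_nonneg hnn s m l j)) (Finset.mem_univ i)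

include hη0 hnn hdiag in
lemma pos_mono' (s : ℕ) (j : Fin n) {m m' : ℕ} (hmm : m ≤ m') (i : Fin n)
    (h : Pos A s j m i) : Pos A s j m' i := by
  induction m' with
  | zero => exact (Nat.le_zero.mp hmm) ▸ h
  | succ m' ih =>
    rcases Nat.lt_or_ge m (m' + 1) with hlt | hge
    · exact pos_mono hη0 hnn hdiag s j m' i (ih (Nat.lt_succ_iff.mp hlt))
    · exact (le_antisymm hmm hge) ▸ h

include hnn in
lemma pos_edge (s : ℕ) (j : Fin n) (m : ℕ) (u v : Fin n)
    (hA : 0 < A (s + m) u v) (h : Pos A s j m v) : Pos A s j (m + 1) u := by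
  match m, h with
  | 0, h =>
    show 0 < Phi A s 0 u j
    subst h
    exact hA
  | m + 1, h =>
    show 0 < Phi A s (m + 1) u j
    rw [phi_succ_apply]
    have h1 : 0 < A (s + m + 1) u v * Phi A s m v j := mul_pos hA h
    refine lt_of_lt_of_le h1 ?_
    exact Finset.single_le_sum (f := fun l => A (s + m + 1) u l * Phi A s m l j)
      (fun l _ => mul_nonneg (hnn _ u l) (phi_nonneg hnn s m l j)) (Finset.mem_univ v)

end aux

lemma cross_lemma {α : Type*} {R : α → α → Prop} {P : α → Prop} {u v : α}
    (h : Relation.ReflTransGen R u v) (hu : P u) (hv : ¬ P v) :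
    ∃ a b, P a ∧ ¬ P b ∧ R a b := by
  revert hv
  induction h with
  | refl => exact fun hv => absurd hu hv
  | @tail b c h1 h2 ih =>
    intro hv
    by_cases hb : P b
    · exact ⟨b, c, hb, hv, h2⟩
    · exact ih hb

/-- Under the weight rule (row stochastic, entries and diagonal `≥ η`) and uniform joint
strong connectivity with window `B`, every entry of `Φ(s+(n−1)B−1, s)` is at least
`η^{(n−1)B}`. -/
theorem stmt11 {n : ℕ} (A : ℕ → Matrix (Fin n) (Fin n) ℝ)
    (η : ℝ) (hη0 : 0 < η) (hη1 : η < 1)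
    (hnn : ∀ k i j, 0 ≤ A k i j) (hrow : ∀ k i, ∑ j, A k i j = 1)
    (hdiag : ∀ k i, η ≤ A k i i)
    (hpos : ∀ k i j, 0 < A k i j → η ≤ A k i j)
    (B : ℕ) (hB : 0 < B)
    (hconn : ∀ k : ℕ, ∀ i j : Fin n,
      Relation.ReflTransGen (fun u v => ∃ t, k ≤ t ∧ t < k + B ∧ 0 < A t v u) i j) :
    ∀ s : ℕ, ∀ i j : Fin n, η ^ ((n - 1) * B) ≤ Phi A s ((n - 1) * B - 1) i j := by
  intro s i j
  classical
  rcases Nat.eq_zero_or_pos n with hn0 | hn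
  · exact absurd i.isLt (by omega)
  -- cardinality growth argument
  set S : ℕ → Finset (Fin n) := fun m => Finset.univ.filter (fun i => Pos A s j (m * B) i)
    with hS
  have hjS : ∀ m, j ∈ S m := by
    intro m
    simp only [hS, Finset.mem_filter, Finset.mem_univ, true_and]
    exact pos_mono' hη0 hnn hdiag s j (Nat.zero_le _) j rfl
  have hmono : ∀ m, S m ⊆ S (m + 1) := by
    intro m x hx
    simp only [hS, Finset.mem_filter, Finset.mem_univ, true_and] at hx ⊢
    exact pos_mono' hη0 hnn hdiag s j (by nlinarith [Nat.le_refl (m*B)]) x hx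
  have hgrow : ∀ m, (S m).card < n → (S m).card + 1 ≤ (S (m + 1)).card := by
    intro m hcard
    -- there is some v not in S m
    have hne : ∃ v, v ∉ S m := by
      by_contra hc
      push_neg at hc
      have : S m = Finset.univ := Finset.eq_univ_of_forall hc
      rw [this, Finset.card_univ, Fintype.card_fin] at hcard
      exact lt_irrefl n hcard
    obtain ⟨v, hv⟩ := hne
    have hpath := hconn (s + m * B) j v
    have hPu : (fun i => Pos A s j (m * B) i) j :=
      pos_mono' hη0 hnn hdiag s j (Nat.zero_le _) j rfl
    have hPv : ¬ (fun i => Pos A s j (m * B) i) v := by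
      intro hc
      exact hv (by simp only [hS, Finset.mem_filter, Finset.mem_univ, true_and]; exact hc)
    obtain ⟨a, b, ha, hb, t, ht1, ht2, htA⟩ := cross_lemma hpath hPu hPv
    -- a is positive at step m*B, edge from a to b at time t ∈ [s+mB, s+mB+B)
    have hts : s ≤ t := le_trans (Nat.le_add_right s (m * B)) ht1
    have hmB_le : m * B ≤ t - s := by omega
    have haPos : Pos A s j (t - s) a := pos_mono' hη0 hnn hdiag s j hmB_le a ha
    have hAts : 0 < A (s + (t - s)) b a := by
      have : s + (t - s) = t := by omega
      rw [this]; exact htA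
    have hbPos : Pos A s j (t - s + 1) b := pos_edge hnn s j (t - s) b a hAts haPos
    have hbPos' : Pos A s j ((m + 1) * B) b := by
      refine pos_mono' hη0 hnn hdiag s j ?_ b hbPos
      have : (m + 1) * B = m * B + B := by ring
      omega
    have hbS : b ∈ S (m + 1) := by
      simp only [hS, Finset.mem_filter, Finset.mem_univ, true_and]; exact hbPos'
    have hbnS : b ∉ S m := by
      intro hc
      apply hb
      simp only [hS, Finset.mem_filter, Finset.mem_univ, true_and] at hc
      exact hc
    have hsub : insert b (S m) ⊆ S (m + 1) := by
      intro x hx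
      rcases Finset.mem_insert.mp hx with h | h
      · exact h ▸ hbS
      · exact hmono m h
    calc (S m).card + 1 = (insert b (S m)).card := (Finset.card_insert_of_notMem hbnS).symm
      _ ≤ (S (m + 1)).card := Finset.card_le_card hsub
  have hcard : ∀ m, min (m + 1) n ≤ (S m).card := by
    intro m
    induction m with
    | zero =>
      have : 1 ≤ (S 0).card := Finset.card_pos.mpr ⟨j, hjS 0⟩
      omega
    | succ m ih =>
      rcases Nat.lt_or_ge (S m).card n with hlt | hge
      · have h1 := hgrow m hlt
        have h2 : min (m + 1) n = m + 1 := by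
          rcases Nat.le_total (m + 1) n with h | h
          · exact Nat.min_eq_left h
          · omega
        omega
      · have : S m ⊆ S (m + 1) := hmono m
        have := Finset.card_le_card this
        omega
  have hfull : ∀ x : Fin n, Pos A s j ((n - 1) * B) x := by
    have h1 := hcard (n - 1)
    have h2 : min (n - 1 + 1) n = n := by omega
    rw [h2] at h1
    have h3 : S (n - 1) = Finset.univ := by
      apply Finset.eq_univ_of_card
      have := Finset.card_le_card (Finset.subset_univ (S (n - 1)))
      simp only [Finset.card_univ, Fintype.card_fin] at this ⊢
      omega
    intro x
    have : x ∈ S (n - 1) := h3 ▸ Finset.mem_univ x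
    simpa only [hS, Finset.mem_filter, Finset.mem_univ, true_and] using this
  rcases Nat.eq_zero_or_pos ((n - 1) * B) with hz | hpz
  · -- n = 1 case
    have hn1 : n = 1 := by
      rcases Nat.mul_eq_zero.mp hz with h | h
      · omega
      · omega
    subst hn1
    have hij : i = j := Subsingleton.elim i j
    subst hij
    rw [hz]
    simp only [pow_zero]
    show (1 : ℝ) ≤ Phi A s (0 - 1) i i
    have : Phi A s (0 - 1) = A s := rfl
    rw [this]
    have := hrow s i
    rw [Fin.sum_univ_one] at this
    have hi0 : i = 0 := Subsingleton.elim i 0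
    rw [hi0] at this ⊢
    exact this.ge
  · obtain ⟨t, ht⟩ := Nat.exists_eq_add_of_lt hpz
    have ht' : (n - 1) * B = t + 1 := by omega
    have := hfull i
    rw [ht'] at this ⊢
    have hP : 0 < Phi A s t i j := this
    have := phi_lb hη0 hnn hpos s t i j hP
    simpa using this
end

section
/- Let h(k) = max_{i,j} |x_i(k) − x_j(k)| for a dynamics x(k+1) = A(k)x(k) + ω(k) with row stochastic A(k), where the perturbation satisfies |ω_i(k)| ≤ L α_k for all i, k, and suppose every transition matrix over a window of length T has all entries ≥ η^T for some η ∈ (0,1). If lim_{k→∞} α_k = 0, then lim_{k→∞} h(k) = 0. -/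
open Filter

lemma Phi_nonneg {n : ℕ} (A : ℕ → Matrix (Fin n) (Fin n) ℝ)
    (hnn : ∀ k i j, 0 ≤ A k i j) (s t : ℕ) (i j : Fin n) : 0 ≤ Phi A s t i j := by
  induction t generalizing i j with
  | zero => exact hnn s i j
  | succ t ih =>
    show 0 ≤ (A (s + t + 1) * Phi A s t) i j
    rw [Matrix.mul_apply]
    exact Finset.sum_nonneg fun l _ => mul_nonneg (hnn _ _ _) (ih _ _)

lemma Phi_row {n : ℕ} (A : ℕ → Matrix (Fin n) (Fin n) ℝ)
    (hrow : ∀ k i, ∑ j, A k i j = 1) (s t : ℕ) (i : Fin n) :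
    ∑ j, Phi A s t i j = 1 := by
  induction t generalizing i with
  | zero => exact hrow s i
  | succ t ih =>
    show ∑ j, (A (s + t + 1) * Phi A s t) i j = 1
    simp only [Matrix.mul_apply]
    rw [Finset.sum_comm]
    calc ∑ l, ∑ j, A (s + t + 1) i l * Phi A s t l j
        = ∑ l, A (s + t + 1) i l * ∑ j, Phi A s t l j := by
          simp [Finset.mul_sum]
      _ = 1 := by simp only [ih]; simpa using hrow (s + t + 1) i

/-- Unrolling the dynamics over a window: accumulated perturbation bound. -/
lemma unroll {n : ℕ} [Nonempty (Fin n)] (A : ℕ → Matrix (Fin n) (Fin n) ℝ)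
    (hnn : ∀ k i j, 0 ≤ A k i j) (hrow : ∀ k i, ∑ j, A k i j = 1)
    (L : ℝ) (α : ℕ → ℝ) (x ω : ℕ → Fin n → ℝ)
    (hdyn : ∀ k i, x (k + 1) i = (∑ j, A k i j * x k j) + ω k i)
    (hω : ∀ k i, |ω k i| ≤ L * α k) (s : ℕ) :
    ∀ t (i : Fin n), |x (s + t + 1) i - ∑ j, Phi A s t i j * x s j|
      ≤ L * ∑ r ∈ Finset.range (t + 1), α (s + r) := by
  intro t
  induction t with
  | zero =>
    intro i
    show |x (s + 0 + 1) i - ∑ j, A s i j * x s j| ≤ L * ∑ r ∈ Finset.range (0 + 1), α (s + r)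
    simp only [Nat.add_zero, Nat.zero_add, Finset.range_one, Finset.sum_singleton]
    rw [hdyn s i]
    simpa using hω s i
  | succ t ih =>
    intro i
    have hx : x (s + (t + 1) + 1) i = (∑ j, A (s + t + 1) i j * x (s + t + 1) j)
        + ω (s + t + 1) i := by
      have := hdyn (s + t + 1) i
      convert this using 3 <;> omega
    have hphi : ∀ l, Phi A s (t + 1) i l = ∑ j, A (s + t + 1) i j * Phi A s t j l := by
      intro l
      show (A (s + t + 1) * Phi A s t) i l = _
      rw [Matrix.mul_apply]
    have eq1 : ∑ l, Phi A s (t + 1) i l * x s l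
        = ∑ j, A (s + t + 1) i j * ∑ l, Phi A s t j l * x s l := by
      simp only [hphi, Finset.sum_mul]
      rw [Finset.sum_comm]
      simp only [Finset.mul_sum, mul_assoc]
    have key : x (s + (t + 1) + 1) i - ∑ l, Phi A s (t + 1) i l * x s l
        = (∑ j, A (s + t + 1) i j * (x (s + t + 1) j - ∑ l, Phi A s t j l * x s l))
          + ω (s + t + 1) i := by
      rw [hx, eq1]
      simp only [mul_sub, Finset.sum_sub_distrib]
      ring
    rw [key]
    have h1 : |∑ j, A (s + t + 1) i j * (x (s + t + 1) j - ∑ l, Phi A s t j l * x s l)|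
        ≤ L * ∑ r ∈ Finset.range (t + 1), α (s + r) := by
      calc |∑ j, A (s + t + 1) i j * (x (s + t + 1) j - ∑ l, Phi A s t j l * x s l)|
          ≤ ∑ j, |A (s + t + 1) i j * (x (s + t + 1) j - ∑ l, Phi A s t j l * x s l)| :=
            Finset.abs_sum_le_sum_abs _ _
        _ ≤ ∑ j : Fin n, A (s + t + 1) i j * (L * ∑ r ∈ Finset.range (t + 1), α (s + r)) := by
            apply Finset.sum_le_sum
            intro j _
            rw [abs_mul, abs_of_nonneg (hnn _ _ _)]
            exact mul_le_mul_of_nonneg_left (ih j) (hnn _ _ _)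
        _ = L * ∑ r ∈ Finset.range (t + 1), α (s + r) := by
            rw [← Finset.sum_mul, hrow, one_mul]
    have h2 : |ω (s + t + 1) i| ≤ L * α (s + (t + 1)) := by
      have heq : s + (t + 1) = s + t + 1 := by omega
      rw [heq]
      exact hω (s + t + 1) i
    calc |(∑ j, A (s + t + 1) i j * (x (s + t + 1) j - ∑ l, Phi A s t j l * x s l))
          + ω (s + t + 1) i|
        ≤ |∑ j, A (s + t + 1) i j * (x (s + t + 1) j - ∑ l, Phi A s t j l * x s l)|
          + |ω (s + t + 1) i| := abs_add_le _ _
      _ ≤ L * (∑ r ∈ Finset.range (t + 1), α (s + r)) + L * α (s + (t + 1)) := by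
          exact add_le_add h1 h2
      _ = L * ∑ r ∈ Finset.range (t + 1 + 1), α (s + r) := by
          rw [Finset.sum_range_succ (f := fun r => α (s + r)) (n := t + 1)]
          ring

/-- Recursion `g(m+1) ≤ c g(m) + γ(m)` with `c ∈ [0,1)` and `γ → 0` forces `g → 0`. -/
lemma recursion_tendsto (c : ℝ) (hc0 : 0 ≤ c) (hc1 : c < 1) (g γ : ℕ → ℝ)
    (hg : ∀ m, 0 ≤ g m) (hrec : ∀ m, g (m + 1) ≤ c * g m + γ m)
    (hγ : Tendsto γ atTop (nhds 0)) : Tendsto g atTop (nhds 0) := by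
  rw [Metric.tendsto_atTop] at hγ ⊢
  intro ε hε
  have hc1' : 0 < 1 - c := by linarith
  obtain ⟨N, hN⟩ := hγ (ε * (1 - c) / 2) (by positivity)
  have key : ∀ k, g (N + k) ≤ c ^ k * g N + ε / 2 := by
    intro k
    induction k with
    | zero => simp; linarith [hg N]
    | succ k ih =>
      have h1 : g (N + k + 1) ≤ c * g (N + k) + γ (N + k) := hrec (N + k)
      have h2 : γ (N + k) < ε * (1 - c) / 2 := by
        have := hN (N + k) (Nat.le_add_right _ _)
        rw [Real.dist_eq, sub_zero] at this
        exact lt_of_abs_lt this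
      have h3 : (N + (k + 1)) = (N + k) + 1 := by omega
      rw [h3, pow_succ]
      nlinarith [pow_nonneg hc0 k, hg N]
  have hpow : Tendsto (fun k => c ^ k * g N) atTop (nhds 0) := by
    have := tendsto_pow_atTop_nhds_zero_of_lt_one hc0 hc1
    simpa using this.mul_const (g N)
  rw [Metric.tendsto_atTop] at hpow
  obtain ⟨K, hK⟩ := hpow (ε / 2) (by positivity)
  refine ⟨N + K, fun m hm => ?_⟩
  have h4 : g m ≤ c ^ (m - N) * g N + ε / 2 := by
    have := key (m - N)
    have h5 : N + (m - N) = m := by omega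
    rwa [h5] at this
  have h6 : c ^ (m - N) * g N < ε / 2 := by
    have := hK (m - N) (by omega)
    rw [Real.dist_eq, sub_zero] at this
    exact lt_of_abs_lt this
  rw [Real.dist_eq, sub_zero, abs_of_nonneg (hg m)]
  linarith

/-- Stitching residue classes mod `T`. -/
lemma tendsto_of_residues (T : ℕ) (hT : 0 < T) (f : ℕ → ℝ)
    (h : ∀ r < T, Tendsto (fun m => f (m * T + r)) atTop (nhds 0)) :
    Tendsto f atTop (nhds 0) := by
  rw [Metric.tendsto_atTop]
  intro ε hε
  have hh : ∀ r, r < T → ∃ N, ∀ m ≥ N, dist (f (m * T + r)) 0 < ε := by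
    intro r hr
    exact Metric.tendsto_atTop.mp (h r hr) ε hε
  choose N hN using hh
  set N' : ℕ → ℕ := fun r => if hr : r < T then N r hr else 0 with hN'
  set M := (Finset.range T).sup N' with hM
  refine ⟨(M + 1) * T, fun k hk => ?_⟩
  have hr : k % T < T := Nat.mod_lt _ hT
  have hkey : (k / T) * T + k % T = k := by
    rw [mul_comm]; exact Nat.div_add_mod k T
  have hm : k / T ≥ N' (k % T) := by
    have h1 : N' (k % T) ≤ M := Finset.le_sup (Finset.mem_range.mpr hr)
    have h2 : M + 1 ≤ k / T := by
      by_contra hcon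
      push_neg at hcon
      have : k < (M + 1) * T := by
        calc k = (k / T) * T + k % T := hkey.symm
          _ < (k / T) * T + T := by omega
          _ = (k / T + 1) * T := by ring
          _ ≤ (M + 1) * T := Nat.mul_le_mul_right _ (by omega)
      omega
    omega
  have := hN (k % T) hr (k / T) (by simpa [hN', dif_pos hr] using hm)
  rwa [hkey] at this

/-- Perturbed consensus dynamics `x(k+1) = A(k)x(k) + ω(k)` with `|ω_i(k)| ≤ Lα_k` and
all entries of every window-`T` transition matrix `≥ η^T`: if `α_k → 0` then the maximal
disagreement `h(k) = max_{i,j} |x_i(k) − x_j(k)|` tends to `0`. -/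
theorem stmt12 {n : ℕ} [Nonempty (Fin n)] (A : ℕ → Matrix (Fin n) (Fin n) ℝ)
    (hnn : ∀ k i j, 0 ≤ A k i j) (hrow : ∀ k i, ∑ j, A k i j = 1)
    (T : ℕ) (hT : 0 < T) (η : ℝ) (hη0 : 0 < η) (hη1 : η < 1)
    (hwin : ∀ s : ℕ, ∀ i j : Fin n, η ^ T ≤ Phi A s (T - 1) i j)
    (L : ℝ) (hL : 0 < L)
    (α : ℕ → ℝ) (hα0 : Tendsto α atTop (nhds 0))
    (x ω : ℕ → Fin n → ℝ)
    (hdyn : ∀ k i, x (k + 1) i = (∑ j, A k i j * x k j) + ω k i)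
    (hω : ∀ k i, |ω k i| ≤ L * α k) :
    Tendsto (fun k => (Finset.univ : Finset (Fin n × Fin n)).sup' Finset.univ_nonempty
        (fun p => |x k p.1 - x k p.2|)) atTop (nhds 0) := by
  set h : ℕ → ℝ := fun k => (Finset.univ : Finset (Fin n × Fin n)).sup' Finset.univ_nonempty
      (fun p => |x k p.1 - x k p.2|) with hh
  set Mx : ℕ → ℝ := fun k => Finset.univ.sup' Finset.univ_nonempty (x k) with hMx
  set mx : ℕ → ℝ := fun k => Finset.univ.inf' Finset.univ_nonempty (x k) with hmx
  have hbound : ∀ k i, mx k ≤ x k i ∧ x k i ≤ Mx k := fun k i =>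
    ⟨Finset.inf'_le _ (Finset.mem_univ i), Finset.le_sup' _ (Finset.mem_univ i)⟩
  have hMm : ∀ k, h k = Mx k - mx k := by
    intro k
    apply le_antisymm
    · apply Finset.sup'_le
      intro p _
      rw [abs_sub_le_iff]
      constructor
      · linarith [(hbound k p.1).2, (hbound k p.2).1]
      · linarith [(hbound k p.2).2, (hbound k p.1).1]
    · obtain ⟨i0, _, hi0⟩ := Finset.exists_mem_eq_sup' (Finset.univ_nonempty (α := Fin n)) (x k)
      obtain ⟨j0, _, hj0⟩ := Finset.exists_mem_eq_inf' (Finset.univ_nonempty (α := Fin n)) (x k)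
      have hi0' : Mx k = x k i0 := hi0
      have hj0' : mx k = x k j0 := hj0
      have h1 : x k i0 - x k j0 ≤ |x k i0 - x k j0| := le_abs_self _
      have h2 : |x k i0 - x k j0| ≤ h k :=
        Finset.le_sup' (fun p : Fin n × Fin n => |x k p.1 - x k p.2|) (Finset.mem_univ (i0, j0))
      linarith
  have hpos : ∀ k, 0 ≤ h k := by
    intro k
    have := hbound k (Classical.arbitrary (Fin n))
    rw [hMm k]; linarith [this.1, this.2]
  -- contraction factor
  set c : ℝ := 1 - η ^ T with hc
  have hδ0 : 0 < η ^ T := pow_pos hη0 T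
  have hδ1 : η ^ T ≤ 1 := pow_le_one₀ hη0.le hη1.le
  have hc0 : 0 ≤ c := by simp [hc]; linarith
  have hc1 : c < 1 := by simp [hc]; linarith
  -- window contraction
  have contract : ∀ s, h (s + T) ≤ c * h s + 2 * L * ∑ r ∈ Finset.range T, α (s + r) := by
    intro s
    set P := Phi A s (T - 1) with hP
    have hTsub : (T - 1) + 1 = T := by omega
    have hPrw : ∀ i, ∑ j, P i j = 1 := fun i => Phi_row A hrow s (T - 1) i
    obtain ⟨l0, _, hl0⟩ := Finset.exists_mem_eq_inf' (Finset.univ_nonempty (α := Fin n)) (x s)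
    have hl0' : mx s = x s l0 := hl0
    have hkey : ∀ i : Fin n, 0 ≤ (∑ l, P i l * x s l) - x s l0 ∧
        (∑ l, P i l * x s l) - x s l0 ≤ c * (Mx s - mx s) := by
      intro i
      have hsplit : (∑ l, P i l * x s l) - x s l0 = ∑ l, P i l * (x s l - x s l0) := by
        simp only [mul_sub, Finset.sum_sub_distrib, ← Finset.sum_mul, hPrw i, one_mul]
      constructor
      · rw [hsplit]
        apply Finset.sum_nonneg
        intro l _
        have hx1 : mx s ≤ x s l := (hbound s l).1
        exact mul_nonneg (Phi_nonneg A hnn s (T - 1) i l) (by linarith)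
      · rw [hsplit]
        have hstep : ∑ l, P i l * (x s l - x s l0)
            = ∑ l ∈ Finset.univ.erase l0, P i l * (x s l - x s l0) := by
          rw [Finset.sum_erase]
          simp
        rw [hstep]
        calc ∑ l ∈ Finset.univ.erase l0, P i l * (x s l - x s l0)
            ≤ ∑ l ∈ Finset.univ.erase l0, P i l * (Mx s - mx s) := by
              apply Finset.sum_le_sum
              intro l _
              apply mul_le_mul_of_nonneg_left _ (Phi_nonneg A hnn s (T - 1) i l)
              have h1 := (hbound s l).2
              linarith
          _ = (1 - P i l0) * (Mx s - mx s) := by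
              rw [← Finset.sum_mul]
              congr 1
              have h3 := Finset.add_sum_erase Finset.univ (P i) (Finset.mem_univ l0)
              rw [← hPrw i]
              linarith [h3]
          _ ≤ c * (Mx s - mx s) := by
              apply mul_le_mul_of_nonneg_right
              · have h4 : η ^ T ≤ P i l0 := hwin s i l0
                have hcc : c = 1 - η ^ T := hc
                linarith
              · have h5 := hbound s (Classical.arbitrary (Fin n))
                linarith [h5.1, h5.2]
    have herr : ∀ i : Fin n, |x (s + T) i - ∑ l, P i l * x s l|
        ≤ L * ∑ r ∈ Finset.range T, α (s + r) := by
      intro i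
      have hu := unroll A hnn hrow L α x ω hdyn hω s (T - 1) i
      rw [hTsub] at hu
      have hsT : s + (T - 1) + 1 = s + T := by omega
      rwa [hsT] at hu
    rw [hMm (s + T), hMm s]
    obtain ⟨i1, _, hi1⟩ := Finset.exists_mem_eq_sup' (Finset.univ_nonempty (α := Fin n)) (x (s + T))
    obtain ⟨j1, _, hj1⟩ := Finset.exists_mem_eq_inf' (Finset.univ_nonempty (α := Fin n)) (x (s + T))
    have hi1' : Mx (s + T) = x (s + T) i1 := hi1
    have hj1' : mx (s + T) = x (s + T) j1 := hj1
    have e1 := abs_le.mp (herr i1)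
    have e2 := abs_le.mp (herr j1)
    have d1 := hkey i1
    have d2 := hkey j1
    rw [hi1', hj1']
    linarith [e1.1, e1.2, e2.1, e2.2, d1.1, d1.2, d2.1, d2.2]
  -- β tends to 0
  have hβ : Tendsto (fun s => 2 * L * ∑ r ∈ Finset.range T, α (s + r)) atTop (nhds 0) := by
    have hsum : Tendsto (fun s => ∑ r ∈ Finset.range T, α (s + r)) atTop (nhds 0) := by
      have : Tendsto (fun s => ∑ r ∈ Finset.range T, α (s + r)) atTop
          (nhds (∑ r ∈ Finset.range T, (0 : ℝ))) := by
        apply tendsto_finset_sum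
        intro r _
        exact hα0.comp (tendsto_add_atTop_nat r)
      simpa using this
    simpa using hsum.const_mul (2 * L)
  -- stitch residues
  apply tendsto_of_residues T hT h
  intro r0 hr0
  apply recursion_tendsto c hc0 hc1 _ (fun m => 2 * L * ∑ r ∈ Finset.range T, α (m * T + r0 + r))
    (fun m => hpos _)
  · intro m
    have hidx : (m + 1) * T + r0 = (m * T + r0) + T := by ring
    rw [hidx]
    exact contract (m * T + r0)
  · apply hβ.comp
    apply tendsto_atTop_atTop.mpr
    intro b
    refine ⟨b, fun m hm => ?_⟩
    calc b ≤ m := hm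
      _ ≤ m * T := Nat.le_mul_of_pos_right m hT
      _ ≤ m * T + r0 := Nat.le_add_right _ _
end

section
/- Under the same perturbed-consensus setting, if in addition Σ_{k=0}^∞ α_k² < ∞, then the weighted disagreement is summable: Σ_{k=0}^∞ α_k h(k) < ∞, where h(k) = max_{i,j} |x_i(k) − x_j(k)|. -/
open Finset Matrix

namespace Matrix

variable {ι : Type*} [Fintype ι] [DecidableEq ι] {P : Matrix ι ι ℝ}

lemma abs_mulVec_le_of_mem_rowStochastic (hP : P ∈ rowStochastic ℝ ι) {v : ι → ℝ} {e : ℝ}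
    (hv : ∀ j, |v j| ≤ e) (i : ι) : |(P *ᵥ v) i| ≤ e :=
  calc |(P *ᵥ v) i| ≤ ∑ j, |P i j * v j| := abs_sum_le_sum_abs _ _
    _ ≤ ∑ j, P i j * e := sum_le_sum fun j _ => by
        rw [abs_mul, abs_of_nonneg (hP.1 i j)]
        exact mul_le_mul_of_nonneg_left (hv j) (hP.1 i j)
    _ = e := by rw [← sum_mul, sum_row_of_mem_rowStochastic hP, one_mul]

lemma card_mul_le_one_of_mem_rowStochastic [Nonempty ι] (hP : P ∈ rowStochastic ℝ ι) {c : ℝ}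
    (hc : ∀ i j, c ≤ P i j) : Fintype.card ι * c ≤ 1 := by
  obtain ⟨i⟩ := ‹Nonempty ι›
  calc (Fintype.card ι : ℝ) * c = ∑ _j : ι, c := by simp
    _ ≤ ∑ j, P i j := sum_le_sum fun j _ => hc i j
    _ = 1 := sum_row_of_mem_rowStochastic hP i

lemma mulVec_apply_le_of_le_entries (hP : P ∈ rowStochastic ℝ ι) {c : ℝ}
    (hc : ∀ i j, c ≤ P i j) {v : ι → ℝ} {b : ℝ} (hv : ∀ j, v j ≤ b) (i : ι) :
    (P *ᵥ v) i ≤ (1 - Fintype.card ι * c) * b + c * ∑ j, v j :=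
  calc (P *ᵥ v) i = ∑ j, (P i j - c) * v j + c * ∑ j, v j := by
        simp only [mulVec, dotProduct, mul_sum, ← sum_add_distrib]
        exact sum_congr rfl fun j _ => by ring
    _ ≤ ∑ j, (P i j - c) * b + c * ∑ j, v j := by
        gcongr with j
        exacts [sub_nonneg.mpr (hc i j), hv j]
    _ = (1 - Fintype.card ι * c) * b + c * ∑ j, v j := by
        rw [← sum_mul, sum_sub_distrib, sum_row_of_mem_rowStochastic hP, sum_const, card_univ,
          nsmul_eq_mul]

end Matrix

section Spread

variable {ι : Type*} [Fintype ι] [Nonempty ι]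

def spread (v : ι → ℝ) : ℝ :=
  univ.sup' univ_nonempty v - univ.inf' univ_nonempty v

lemma spread_nonneg (v : ι → ℝ) : 0 ≤ spread v := by
  obtain ⟨i⟩ := ‹Nonempty ι›
  exact sub_nonneg.mpr ((inf'_le v (mem_univ i)).trans (le_sup' v (mem_univ i)))

lemma sup'_abs_sub_eq_spread (v : ι → ℝ) :
    (univ : Finset (ι × ι)).sup' univ_nonempty (fun p => |v p.1 - v p.2|) = spread v := by
  have hle : ∀ i j, v i - v j ≤ spread v := fun i j =>
    sub_le_sub (le_sup' v (mem_univ i)) (inf'_le v (mem_univ j))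
  apply le_antisymm
  · exact sup'_le _ _ fun p _ => abs_sub_le_iff.mpr ⟨hle p.1 p.2, hle p.2 p.1⟩
  · obtain ⟨i, -, hi⟩ := exists_mem_eq_sup' univ_nonempty v
    obtain ⟨j, -, hj⟩ := exists_mem_eq_inf' univ_nonempty v
    calc spread v = v i - v j := by rw [spread, hi, hj]
      _ ≤ |v i - v j| := le_abs_self _
      _ ≤ _ := le_sup' (fun p : ι × ι => |v p.1 - v p.2|) (mem_univ (i, j))

variable [DecidableEq ι]

lemma spread_le_of_abs_sub_mulVec_le {P : Matrix ι ι ℝ} (hP : P ∈ rowStochastic ℝ ι) {c : ℝ}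
    (hc : ∀ i j, c ≤ P i j) {v y : ι → ℝ} {e : ℝ} (hy : ∀ i, |y i - (P *ᵥ v) i| ≤ e) :
    spread y ≤ (1 - Fintype.card ι * c) * spread v + 2 * e := by
  set M := univ.sup' univ_nonempty v
  set m := univ.inf' univ_nonempty v
  have hupper : ∀ i, y i ≤ (1 - Fintype.card ι * c) * M + c * ∑ j, v j + e := fun i => by
    have := mulVec_apply_le_of_le_entries hP hc (b := M) (fun j => le_sup' v (mem_univ j)) i
    linarith [(abs_le.mp (hy i)).2]
  have hlower : ∀ i, (1 - Fintype.card ι * c) * m + c * ∑ j, v j - e ≤ y i := fun i => by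
    have := mulVec_apply_le_of_le_entries hP hc (v := -v) (b := -m)
      (fun j => neg_le_neg (inf'_le v (mem_univ j))) i
    simp only [mulVec_neg, Pi.neg_apply, sum_neg_distrib] at this
    linarith [(abs_le.mp (hy i)).1]
  have h1 := sup'_le univ_nonempty y fun i _ => hupper i
  have h2 := le_inf' univ_nonempty y fun i _ => hlower i
  simp only [spread]
  linarith

end Spread

lemma summable_sq_sum_range_add {a : ℕ → ℝ} (ha : Summable fun k => a k ^ 2) (N : ℕ) :
    Summable fun k => (∑ t ∈ range N, a (k + t)) ^ 2 := by
  have hwindow : Summable fun k => N * ∑ t ∈ range N, a (k + t) ^ 2 :=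
    (summable_sum fun t _ => (summable_nat_add_iff t).mpr ha).mul_left _
  refine hwindow.of_nonneg_of_le (fun k => sq_nonneg _) fun k => ?_
  simpa using sq_sum_le_card_mul_sum_sq (s := range N) (f := fun t => a (k + t))

/-- A discrete Lyapunov argument for `u ^ 2`: by convexity of the square,
`(r a + b) ^ 2 ≤ r a ^ 2 + b ^ 2 / (1 - r)`, so the partial sums of `u ^ 2` satisfy
`(1 - r) ∑_{k<N} u k ^ 2 ≤ ∑_{k<d} u k ^ 2 + ∑' k, s k ^ 2 / (1 - r)`. -/
lemma summable_sq_of_le_mul_add {u s : ℕ → ℝ} {r : ℝ} {d : ℕ} (hu : ∀ k, 0 ≤ u k)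
    (hr0 : 0 ≤ r) (hr1 : r < 1) (hs : Summable fun k => s k ^ 2)
    (h : ∀ k, u (k + d) ≤ r * u k + s k) : Summable fun k => u k ^ 2 := by
  have hr : 0 < 1 - r := sub_pos.mpr hr1
  have hstep : ∀ k, u (k + d) ^ 2 ≤ r * u k ^ 2 + s k ^ 2 / (1 - r) := fun k => by
    have hsq : u (k + d) ^ 2 ≤ (r * u k + s k) ^ 2 := pow_le_pow_left₀ (hu _) (h k) 2
    have hconv : (r * u k + s k) ^ 2 ≤ r * u k ^ 2 + s k ^ 2 / (1 - r) := by
      rw [← sub_nonneg]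
      have : r * u k ^ 2 + s k ^ 2 / (1 - r) - (r * u k + s k) ^ 2
          = r / (1 - r) * ((1 - r) * u k - s k) ^ 2 := by field_simp; ring
      rw [this]
      positivity
    exact hsq.trans hconv
  set C := ∑ k ∈ range d, u k ^ 2 + (∑' k, s k ^ 2) / (1 - r)
  refine summable_of_sum_range_le (c := C / (1 - r)) (fun k => sq_nonneg _) fun N => ?_
  have htail : ∑ k ∈ range N, u (k + d) ^ 2
      ≤ r * ∑ k ∈ range N, u k ^ 2 + (∑' k, s k ^ 2) / (1 - r) :=
    calc ∑ k ∈ range N, u (k + d) ^ 2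
        ≤ ∑ k ∈ range N, (r * u k ^ 2 + s k ^ 2 / (1 - r)) := sum_le_sum fun k _ => hstep k
      _ = r * ∑ k ∈ range N, u k ^ 2 + (∑ k ∈ range N, s k ^ 2) / (1 - r) := by
          rw [sum_add_distrib, mul_sum, sum_div]
      _ ≤ r * ∑ k ∈ range N, u k ^ 2 + (∑' k, s k ^ 2) / (1 - r) := by
          gcongr
          exact hs.sum_le_tsum _ fun k _ => sq_nonneg _
  have hsplit : ∑ k ∈ range N, u k ^ 2
      ≤ ∑ k ∈ range d, u k ^ 2 + ∑ k ∈ range N, u (k + d) ^ 2 :=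
    calc ∑ k ∈ range N, u k ^ 2 ≤ ∑ k ∈ range (d + N), u k ^ 2 :=
          sum_le_sum_of_subset_of_nonneg (range_subset_range.mpr (by omega))
            fun k _ _ => sq_nonneg _
      _ = _ := by simp_rw [sum_range_add, add_comm d]
  rw [le_div_iff₀ hr]
  linarith

lemma summable_mul_of_summable_sq {a b : ℕ → ℝ} (ha : Summable fun k => a k ^ 2)
    (hb : Summable fun k => b k ^ 2) : Summable fun k => a k * b k :=
  .of_norm_bounded (ha.add hb) fun k => by
    rw [Real.norm_eq_abs, abs_mul, ← sq_abs (a k), ← sq_abs (b k)]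
    nlinarith [two_mul_le_add_sq |a k| |b k|, abs_nonneg (a k), abs_nonneg (b k)]

section Dynamics

variable {n : ℕ} {A : ℕ → Matrix (Fin n) (Fin n) ℝ}

lemma Phi_mem_rowStochastic (hA : ∀ k, A k ∈ rowStochastic ℝ (Fin n)) (s : ℕ) :
    ∀ m, Phi A s m ∈ rowStochastic ℝ (Fin n)
  | 0 => hA s
  | m + 1 => Submonoid.mul_mem _ (hA _) (Phi_mem_rowStochastic hA s m)

lemma abs_sub_Phi_mulVec_le (hA : ∀ k, A k ∈ rowStochastic ℝ (Fin n)) {x ω : ℕ → Fin n → ℝ}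
    (hdyn : ∀ k, x (k + 1) = A k *ᵥ x k + ω k) {b : ℕ → ℝ} (hω : ∀ k i, |ω k i| ≤ b k)
    (k m : ℕ) (i : Fin n) :
    |x (k + m + 1) i - (Phi A k m *ᵥ x k) i| ≤ ∑ t ∈ range (m + 1), b (k + t) := by
  induction m generalizing i with
  | zero => simpa [hdyn, Phi] using hω k i
  | succ m ih =>
    have hrec : x (k + (m + 1) + 1) - Phi A k (m + 1) *ᵥ x k
        = A (k + m + 1) *ᵥ (x (k + m + 1) - Phi A k m *ᵥ x k) + ω (k + m + 1) := by
      rw [Phi, ← mulVec_mulVec, mulVec_sub, ← add_assoc k m 1, hdyn]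
      abel
    calc |x (k + (m + 1) + 1) i - (Phi A k (m + 1) *ᵥ x k) i|
        ≤ |(A (k + m + 1) *ᵥ (x (k + m + 1) - Phi A k m *ᵥ x k)) i| + |ω (k + m + 1) i| := by
          rw [← Pi.sub_apply, hrec]
          exact abs_add_le _ _
      _ ≤ ∑ t ∈ range (m + 1), b (k + t) + b (k + (m + 1)) :=
          add_le_add (abs_mulVec_le_of_mem_rowStochastic (hA _) ih i) (hω _ i)
      _ = ∑ t ∈ range (m + 1 + 1), b (k + t) := (sum_range_succ _ _).symm

end Dynamics

theorem stmt13_general {n : ℕ} [Nonempty (Fin n)] (A : ℕ → Matrix (Fin n) (Fin n) ℝ)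
    (hnn : ∀ k i j, 0 ≤ A k i j) (hrow : ∀ k i, ∑ j, A k i j = 1)
    (T : ℕ) (η : ℝ) (hη0 : 0 < η)
    (hwin : ∀ s : ℕ, ∀ i j : Fin n, η ^ T ≤ Phi A s (T - 1) i j)
    (L : ℝ)
    (α : ℕ → ℝ) (hα2 : Summable (fun k => α k ^ 2))
    (x ω : ℕ → Fin n → ℝ)
    (hdyn : ∀ k i, x (k + 1) i = (∑ j, A k i j * x k j) + ω k i)
    (hω : ∀ k i, |ω k i| ≤ L * α k) :
    Summable (fun k => α k * (Finset.univ : Finset (Fin n × Fin n)).sup' Finset.univ_nonempty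
        (fun p => |x k p.1 - x k p.2|)) := by
  have hA : ∀ k, A k ∈ rowStochastic ℝ (Fin n) := fun k =>
    mem_rowStochastic_iff_sum.mpr ⟨hnn k, hrow k⟩
  have hcontr : ∀ k, spread (x (k + (T - 1 + 1)))
      ≤ (1 - n * η ^ T) * spread (x k) + 2 * L * ∑ t ∈ range (T - 1 + 1), α (k + t) := by
    intro k
    have := spread_le_of_abs_sub_mulVec_le (Phi_mem_rowStochastic hA k (T - 1)) (hwin k)
      (abs_sub_Phi_mulVec_le hA (fun k => funext (hdyn k)) hω k (T - 1))
    simpa [← add_assoc, mul_sum, mul_assoc] using this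
  have hr0 : 0 ≤ 1 - n * η ^ T := by
    simpa using card_mul_le_one_of_mem_rowStochastic (Phi_mem_rowStochastic hA 0 (T - 1)) (hwin 0)
  have hr1 : 1 - n * η ^ T < 1 := by
    have : 0 < n := Fin.pos_iff_nonempty.mpr ‹_›
    have : 0 < η ^ T := pow_pos hη0 T
    exact sub_lt_self _ (by positivity)
  have hnoise : Summable fun k => (2 * L * ∑ t ∈ range (T - 1 + 1), α (k + t)) ^ 2 :=
    ((summable_sq_sum_range_add hα2 _).mul_left ((2 * L) ^ 2)).congr fun k => (mul_pow _ _ 2).symm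
  have hspread := summable_sq_of_le_mul_add (fun k => spread_nonneg _) hr0 hr1 hnoise hcontr
  simpa only [sup'_abs_sub_eq_spread] using summable_mul_of_summable_sq hα2 hspread

/-- Perturbed consensus dynamics with square-summable stepsizes: the weighted
disagreement `Σ_k α_k h(k)` is finite, where `h(k) = max_{i,j} |x_i(k) − x_j(k)|`. -/
theorem stmt13 {n : ℕ} [Nonempty (Fin n)] (A : ℕ → Matrix (Fin n) (Fin n) ℝ)
    (hnn : ∀ k i j, 0 ≤ A k i j) (hrow : ∀ k i, ∑ j, A k i j = 1)
    (T : ℕ) (hT : 0 < T) (η : ℝ) (hη0 : 0 < η) (hη1 : η < 1)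
    (hwin : ∀ s : ℕ, ∀ i j : Fin n, η ^ T ≤ Phi A s (T - 1) i j)
    (L : ℝ) (hL : 0 < L)
    (α : ℕ → ℝ) (hαpos : ∀ k, 0 < α k) (hα2 : Summable (fun k => α k ^ 2))
    (x ω : ℕ → Fin n → ℝ)
    (hdyn : ∀ k i, x (k + 1) i = (∑ j, A k i j * x k j) + ω k i)
    (hω : ∀ k i, |ω k i| ≤ L * α k) :
    Summable (fun k => α k * (Finset.univ : Finset (Fin n × Fin n)).sup' Finset.univ_nonempty
        (fun p => |x k p.1 - x k p.2|)) :=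
  stmt13_general A hnn hrow T η hη0 hwin L α hα2 x ω hdyn hω
end

section
/- Suppose a real sequence {h(k)} satisfies h(s+(t+1)T) ≤ (1−c) h(s+tT) + 2L β_{s,t} for all s ∈ {0,…,T−1} and t ∈ ℕ, where c ∈ (0,1), L > 0, T ≥ 1, β_{s,t} = Σ_{r=s+tT}^{s+(t+1)T−1} α_r, and α_k ≥ 0 with Σ_{k=0}^∞ α_k² < ∞ and h(k) ≥ 0. Then Σ_{k=0}^∞ α_k h(k) < ∞. -/
/-!
Split `ℕ` into the residue classes `s + tT`. Along one class, `x t = h (s + tT)` obeys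
`x (t+1) ≤ (1 - c) x t + u t`, where `u t = 2Lβ_{s,t}` is square-summable: by Cauchy–Schwarz
`β_{s,t}² ≤ T Σ_{j < T} α_{s+tT+j}²`, a sum of `T` subsequences of `α²`. Convexity of the square
turns the recursion into `x (t+1)² ≤ (1 - c) x t² + u t² / c`, and summing it shows
`Σ x t² < ∞`. Finally `|α_k h_k| ≤ (α_k² + h_k²) / 2` on each class.
-/

open Finset

theorem add_mul_right_injective (s : ℕ) {T : ℕ} (hT : 0 < T) :
    Function.Injective fun t => s + t * T :=
  (add_right_injective s).comp (mul_left_injective₀ hT.ne')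

theorem summable_of_summable_comp_add_mul {M : Type*} [AddCommMonoid M] [TopologicalSpace M]
    [ContinuousAdd M] {f : ℕ → M} {T : ℕ} (hT : 0 < T)
    (hf : ∀ s < T, Summable fun t => f (s + t * T)) : Summable f := by
  have hdecomp : f = fun k => ∑ s ∈ range T, (Set.range fun t => s + t * T).indicator f k := by
    funext k
    rw [sum_eq_single_of_mem (k % T) (mem_range.2 (Nat.mod_lt k hT)),
      Set.indicator_of_mem (show k ∈ Set.range _ from ⟨k / T, Nat.mod_add_div' k T⟩)]
    rintro s hs hne
    refine Set.indicator_of_notMem ?_ f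
    rintro ⟨t, rfl⟩
    exact hne (by simp [Nat.mod_eq_of_lt (mem_range.1 hs)])
  rw [hdecomp]
  refine summable_sum fun s hs => ?_
  rw [← (add_mul_right_injective s hT).summable_iff fun k hk => Set.indicator_of_notMem hk f]
  convert hf s (mem_range.1 hs) using 1
  funext t
  exact Set.indicator_of_mem (Set.mem_range_self t) f

theorem summable_sq_sum_Ico_add_mul {f : ℕ → ℝ} (hf : Summable fun k => f k ^ 2) (s : ℕ)
    {T : ℕ} (hT : 0 < T) :
    Summable fun t => (∑ r ∈ Ico (s + t * T) (s + (t + 1) * T), f r) ^ 2 := by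
  have hwindow : ∀ t, ∑ r ∈ Ico (s + t * T) (s + (t + 1) * T), f r
      = ∑ j ∈ range T, f (s + t * T + j) := fun t => by
    rw [sum_Ico_eq_sum_range, add_one_mul, ← add_assoc, Nat.add_sub_cancel_left]
  have hbound : Summable fun t => (T : ℝ) * ∑ j ∈ range T, f (s + t * T + j) ^ 2 :=
    (summable_sum fun j _ =>
      hf.comp_injective ((add_left_injective j).comp (add_mul_right_injective s hT))).mul_left _
  refine hbound.of_nonneg_of_le (fun t => sq_nonneg _) fun t => ?_
  rw [hwindow]
  simpa using sq_sum_le_card_mul_sum_sq (s := range T) (f := fun j => f (s + t * T + j))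

theorem sq_one_sub_mul_add_le {c : ℝ} (hc0 : 0 < c) (hc1 : c ≤ 1) (x u : ℝ) :
    ((1 - c) * x + u) ^ 2 ≤ (1 - c) * x ^ 2 + u ^ 2 / c := by
  have hgap : (1 - c) * x ^ 2 + u ^ 2 / c - ((1 - c) * x + u) ^ 2
      = (1 - c) * (c * x - u) ^ 2 / c := by
    field_simp
    ring
  have : 0 ≤ (1 - c) * (c * x - u) ^ 2 / c := by
    have : 0 ≤ 1 - c := by linarith
    positivity
  linarith

theorem summable_of_le_one_sub_mul_add {y v : ℕ → ℝ} {c : ℝ} (hy : ∀ t, 0 ≤ y t)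
    (hv0 : ∀ t, 0 ≤ v t) (hv : Summable v) (hc0 : 0 < c)
    (hrec : ∀ t, y (t + 1) ≤ (1 - c) * y t + v t) : Summable y := by
  refine summable_of_sum_range_le (c := (y 0 + ∑' t, v t) / c) hy fun n => ?_
  have hmono : ∑ t ∈ range n, y t ≤ ∑ t ∈ range (n + 1), y t :=
    sum_le_sum_of_subset_of_nonneg (range_subset_range.2 n.le_succ) fun t _ _ => hy t
  have hstep :
      ∑ t ∈ range (n + 1), y t ≤ y 0 + (1 - c) * ∑ t ∈ range n, y t + ∑' t, v t :=
    calc ∑ t ∈ range (n + 1), y t = y 0 + ∑ t ∈ range n, y (t + 1) := by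
          rw [sum_range_succ', add_comm]
      _ ≤ y 0 + ∑ t ∈ range n, ((1 - c) * y t + v t) := by gcongr with t; exact hrec t
      _ ≤ y 0 + (1 - c) * ∑ t ∈ range n, y t + ∑' t, v t := by
          rw [sum_add_distrib, ← mul_sum, add_assoc]
          gcongr
          exact hv.sum_le_tsum _ fun t _ => hv0 t
  rw [le_div_iff₀ hc0]
  nlinarith

theorem summable_sq_of_le_one_sub_mul_add {x u : ℕ → ℝ} {c : ℝ} (hx : ∀ t, 0 ≤ x t)
    (hu : Summable fun t => u t ^ 2) (hc0 : 0 < c) (hc1 : c ≤ 1)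
    (hrec : ∀ t, x (t + 1) ≤ (1 - c) * x t + u t) : Summable fun t => x t ^ 2 :=
  summable_of_le_one_sub_mul_add (fun t => sq_nonneg _) (fun t => by positivity) (hu.div_const c)
    hc0 fun t => (pow_le_pow_left₀ (hx _) (hrec t) 2).trans (sq_one_sub_mul_add_le hc0 hc1 _ _)

theorem summable_mul_of_summable_sq_s14 {ι : Type*} {f g : ι → ℝ} (hf : Summable fun i => f i ^ 2)
    (hg : Summable fun i => g i ^ 2) : Summable fun i => f i * g i := by
  refine Summable.of_norm_bounded ((hf.add hg).div_const 2) fun i => ?_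
  rw [Real.norm_eq_abs, abs_mul, le_div_iff₀ two_pos, ← sq_abs (f i), ← sq_abs (g i)]
  linarith [two_mul_le_add_sq |f i| |g i|]

theorem stmt14_general (h : ℕ → ℝ) (hh : ∀ k, 0 ≤ h k)
    (α : ℕ → ℝ) (hα2 : Summable (fun k => α k ^ 2))
    (c : ℝ) (hc0 : 0 < c) (hc1 : c < 1) (L : ℝ)
    (T : ℕ) (hT : 1 ≤ T)
    (hrec : ∀ s < T, ∀ t : ℕ,
      h (s + (t + 1) * T) ≤ (1 - c) * h (s + t * T)
        + 2 * L * ∑ r ∈ Finset.Ico (s + t * T) (s + (t + 1) * T), α r) :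
    Summable (fun k => α k * h k) := by
  refine summable_of_summable_comp_add_mul hT fun s hs => ?_
  have hα2_class : Summable fun t => α (s + t * T) ^ 2 :=
    hα2.comp_injective (add_mul_right_injective s hT)
  have hforcing : Summable fun t =>
      (2 * L * ∑ r ∈ Ico (s + t * T) (s + (t + 1) * T), α r) ^ 2 := by
    simp only [mul_pow]
    exact (summable_sq_sum_Ico_add_mul hα2 s hT).mul_left _
  have hh2_class : Summable fun t => h (s + t * T) ^ 2 :=
    summable_sq_of_le_one_sub_mul_add (fun t => hh _) hforcing hc0 hc1.le (hrec s hs)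
  exact summable_mul_of_summable_sq_s14 hα2_class hh2_class

/-- Abstract contraction recursion along residue classes mod `T`:
if `h(s+(t+1)T) ≤ (1−c)h(s+tT) + 2L β_{s,t}` with `β_{s,t} = Σ_{r=s+tT}^{s+(t+1)T−1} α_r`,
`c ∈ (0,1)`, `h ≥ 0`, `α ≥ 0` square-summable, then `Σ_k α_k h(k) < ∞`. -/
theorem stmt14 (h : ℕ → ℝ) (hh : ∀ k, 0 ≤ h k)
    (α : ℕ → ℝ) (hα : ∀ k, 0 ≤ α k) (hα2 : Summable (fun k => α k ^ 2))
    (c : ℝ) (hc0 : 0 < c) (hc1 : c < 1) (L : ℝ) (hL : 0 < L)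
    (T : ℕ) (hT : 1 ≤ T)
    (hrec : ∀ s < T, ∀ t : ℕ,
      h (s + (t + 1) * T) ≤ (1 - c) * h (s + t * T)
        + 2 * L * ∑ r ∈ Finset.Ico (s + t * T) (s + (t + 1) * T), α r) :
    Summable (fun k => α k * h k) :=
  stmt14_general h hh α hα2 c hc0 hc1 L T hT hrec
end

section
/- Let f₁,…,f_n be convex continuous functions on a closed convex set X ⊆ ℝ^m, let X_i* = argmin_{x∈X} f_i(x) be nonempty for each i, and suppose ⋂_{i} X_i* = ∅. Let x̂ ∈ argmin_{x∈X} Σ_i (1/n) f_i(x). Then there exist an index i₀ and a point x̃ ∈ X_{i₀}* with f_{i₀}(x̃) < f_{i₀}(x̂), and there exists a positive stochastic weight vector μ ∈ ℝ^n such that Σ_i μ_i f_i(x̃) < Σ_i μ_i f_i(x̂); consequently x̂ ∉ argmin_{x∈X} Σ_i μ_i f_i(x). -/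
/-- Necessity construction: if the local optimal sets `X_i*` have empty intersection and
`x̂` minimizes the uniform average, then some agent `i₀` has a minimizer `x̃` strictly
better for `f_{i₀}`, and a positive stochastic weight vector `μ` exists whose weighted sum
is strictly smaller at `x̃` than at `x̂`; in particular `x̂` does not minimize the
`μ`-weighted problem. -/
theorem stmt15 {m n : ℕ} (X : Set (EuclideanSpace ℝ (Fin m)))
    (hcl : IsClosed X) (hconv : Convex ℝ X)
    (f : Fin n → EuclideanSpace ℝ (Fin m) → ℝ)
    (hfc : ∀ i, ConvexOn ℝ X (f i)) (hcont : ∀ i, ContinuousOn (f i) X)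
    (Xi : Fin n → Set (EuclideanSpace ℝ (Fin m)))
    (hXi : ∀ i, Xi i = {z | z ∈ X ∧ ∀ y ∈ X, f i z ≤ f i y})
    (hXine : ∀ i, (Xi i).Nonempty)
    (hint : ⋂ i, Xi i = ∅)
    (xhat : EuclideanSpace ℝ (Fin m)) (hxhatX : xhat ∈ X)
    (hxhat : ∀ y ∈ X, ∑ i, (1 / (n : ℝ)) * f i xhat ≤ ∑ i, (1 / (n : ℝ)) * f i y) :
    ∃ (i₀ : Fin n) (xt : EuclideanSpace ℝ (Fin m)) (μ : Fin n → ℝ),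
      xt ∈ Xi i₀ ∧ f i₀ xt < f i₀ xhat ∧
      (∀ i, 0 < μ i) ∧ (∑ i, μ i = 1) ∧
      (∑ i, μ i * f i xt) < (∑ i, μ i * f i xhat) ∧
      ¬ (∀ y ∈ X, ∑ i, μ i * f i xhat ≤ ∑ i, μ i * f i y) := by
  have hx : xhat ∉ ⋂ i, Xi i := by simp [hint]
  rw [Set.mem_iInter] at hx
  push_neg at hx
  obtain ⟨i₀, hi₀⟩ := hx
  obtain ⟨xt, hxt⟩ := hXine i₀
  have hxt' := hxt
  rw [hXi i₀] at hxt'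
  have hxtX : xt ∈ X := hxt'.1
  have hxtmin : ∀ y ∈ X, f i₀ xt ≤ f i₀ y := hxt'.2
  have hlt : f i₀ xt < f i₀ xhat := by
    rw [hXi i₀] at hi₀
    by_contra h
    push_neg at h
    exact hi₀ ⟨hxhatX, fun y hy => le_trans h (hxtmin y hy)⟩
  -- construction of μ
  set E : Finset (Fin n) := Finset.univ.erase i₀ with hE
  set k : ℝ := (E.card : ℝ) with hk
  have hk0 : 0 ≤ k := by positivity
  set D : ℝ := f i₀ xt - f i₀ xhat with hD
  have hD0 : D < 0 := by simp [hD]; linarith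
  set T : ℝ := ∑ i ∈ E, (f i xt - f i xhat) with hT
  set C : ℝ := T - k * D with hC
  set ε : ℝ := if C ≤ 0 then 1 / (2 * (k + 1)) else min (1 / (2 * (k + 1))) (-D / (2 * C))
    with hε
  have hεpos : 0 < ε := by
    rw [hε]
    split_ifs with h
    · positivity
    · push_neg at h
      exact lt_min (by positivity) (div_pos (by linarith) (by linarith))
  have hεle : ε ≤ 1 / (2 * (k + 1)) := by
    rw [hε]; split_ifs with h
    · exact le_rfl
    · exact min_le_left _ _
  have hεC : ε * C ≤ -D / 2 := by
    rw [hε]; split_ifs with h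
    · nlinarith
    · push_neg at h
      have h2 : min (1 / (2 * (k + 1))) (-D / (2 * C)) ≤ -D / (2 * C) := min_le_right _ _
      have : min (1 / (2 * (k + 1))) (-D / (2 * C)) * C ≤ (-D / (2 * C)) * C :=
        mul_le_mul_of_nonneg_right h2 h.le
      have hCne : C ≠ 0 := ne_of_gt h
      calc min (1 / (2 * (k + 1))) (-D / (2 * C)) * C ≤ (-D / (2 * C)) * C := this
        _ = -D / 2 := by field_simp
  have hμ0pos : 0 < 1 - k * ε := by
    have : k * ε ≤ k * (1 / (2 * (k + 1))) := mul_le_mul_of_nonneg_left hεle hk0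
    have h2 : k * (1 / (2 * (k + 1))) < 1 := by
      rw [mul_one_div, div_lt_one (by linarith)]
      linarith
    nlinarith
  set μ : Fin n → ℝ := fun i => if i = i₀ then 1 - k * ε else ε with hμ
  have hμpos : ∀ i, 0 < μ i := by
    intro i
    rw [hμ]
    dsimp only
    split_ifs with h
    · exact hμ0pos
    · exact hεpos
  -- sum splitting lemma
  have hsplit : ∀ g : Fin n → ℝ, ∑ i, μ i * g i = (1 - k * ε) * g i₀ + ε * ∑ i ∈ E, g i := by
    intro g
    rw [← Finset.add_sum_erase Finset.univ (fun i => μ i * g i) (Finset.mem_univ i₀)]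
    have h1 : μ i₀ = 1 - k * ε := by simp [hμ]
    have h2 : ∑ i ∈ E, μ i * g i = ε * ∑ i ∈ E, g i := by
      rw [Finset.mul_sum]
      apply Finset.sum_congr rfl
      intro i hi
      have : i ≠ i₀ := (Finset.mem_erase.mp hi).1
      simp [hμ, this]
    rw [h1, h2]
  have hsum1 : ∑ i, μ i = 1 := by
    have h := hsplit (fun _ => 1)
    simp only [mul_one] at h
    rw [Finset.sum_const, nsmul_eq_mul, mul_one] at h
    rw [h, ← hk]; ring
  have hkey : (∑ i, μ i * f i xt) < (∑ i, μ i * f i xhat) := by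
    have h1 := hsplit (fun i => f i xt)
    have h2 := hsplit (fun i => f i xhat)
    have hdiff : (∑ i, μ i * f i xt) - (∑ i, μ i * f i xhat) = D + ε * C := by
      rw [h1, h2, hC, hT, hD]
      rw [Finset.sum_sub_distrib]
      ring
    nlinarith [hεC, hD0]
  refine ⟨i₀, xt, μ, hxt, hlt, hμpos, hsum1, hkey, ?_⟩
  intro h
  exact absurd (h xt hxtX) (not_le.mpr hkey)
end
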